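/- Let G be a finite graph with edge-labeling α: E → Z, let m = p1^{e1}⋯pt^{et} with distinct primes pi, and let u, v ∈ V. Then every spline f over Z/mZ on (G, α) satisfies f(u) = f(v) if and only if for every i, the vertices u and v lie in the same zero-connected component of G mod pi^{ei}. -/

import Mathlib

/-!
Reduction mod `pᵢ^eᵢ` sends splines to splines, and a spline over `ZMod (pᵢ^eᵢ)` is constant
across every edge whose label vanishes there, hence on zero-connected components mod `pᵢ^eᵢ`;
by the Chinese remainder theorem this forces `f u = f v`.

Conversely, if `u` and `v` lie in different components mod `q = p^e`, then `p^(e-1)` times the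
indicator of the component of `u` is a spline over `ZMod q`: the label `a` of an edge leaving
the component is not divisible by `q`, so `gcd(a, q)` divides `p^(e-1)`. Placed in the `i`-th
coordinate of the Chinese remainder decomposition, it becomes a spline over `ZMod m`
separating `u` and `v`.
-/

section Splines

variable {V A B : Type*} [CommRing A] [CommRing B]

def IsSpline (E : V → V → Prop) (α : V → V → ℤ) (f : V → A) : Prop :=
  ∀ x y, E x y → f x - f y ∈ Ideal.span {(α x y : A)}

def SameZeroComponent (E : V → V → Prop) (α : V → V → ℤ) (k : ℤ) : V → V → Prop :=
  Relation.EqvGen fun a b => E a b ∧ k ∣ α a b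

variable {E : V → V → Prop} {α : V → V → ℤ}

theorem IsSpline.map {f : V → A} (hf : IsSpline E α f) (φ : A →+* B) :
    IsSpline E α (φ ∘ f) := by
  intro x y hxy
  simpa [Ideal.map_span] using Ideal.mem_map_of_mem φ (hf x y hxy)

theorem IsSpline.piSingle {ι : Type*} [DecidableEq ι] {A : ι → Type*} [∀ i, CommRing (A i)]
    {i : ι} {g : V → A i} (hg : IsSpline E α g) :
    IsSpline E α fun x => Pi.single i (g x) := by
  intro x y hxy
  obtain ⟨t, ht⟩ := Ideal.mem_span_singleton'.mp (hg x y hxy)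
  refine Ideal.mem_span_singleton'.mpr ⟨Pi.single i t, ?_⟩
  rw [← Pi.single_sub, ← ht]
  exact (Pi.single_mul_left (f := fun j => (α x y : A j)) t).symm

theorem IsSpline.eq_of_eqvGen {f : V → A} (hf : IsSpline E α f) {u v : V}
    (h : Relation.EqvGen (fun a b => E a b ∧ (α a b : A) = 0) u v) : f u = f v := by
  have hequiv : Equivalence fun a b => f a = f b := InvImage.equivalence _ _ eq_equivalence
  refine hequiv.eqvGen_iff.mp (Relation.EqvGen.mono ?_ u v h)
  rintro a b ⟨hab, hα⟩
  simpa [hα, sub_eq_zero] using hf a b hab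

theorem IsSpline.eq_of_sameZeroComponent {n : ℕ} {f : V → ZMod n} (hf : IsSpline E α f)
    {u v : V} (h : SameZeroComponent E α n u v) : f u = f v :=
  hf.eq_of_eqvGen <| Relation.EqvGen.mono
    (fun _ _ ⟨hab, hdvd⟩ => ⟨hab, (ZMod.intCast_zmod_eq_zero_iff_dvd _ n).mpr hdvd⟩) u v h

theorem isSpline_indicator_sameZeroComponent {k : ℤ} {c : A}
    (hc : ∀ x y, E x y → ¬ k ∣ α x y → (α x y : A) ∣ c) (u : V) :
    IsSpline E α ({x | SameZeroComponent E α k u x}.indicator fun _ => c) := by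
  classical
  intro x y hxy
  rw [Ideal.mem_span_singleton, Set.indicator_apply, Set.indicator_apply]
  by_cases hk : k ∣ α x y
  · have hiff : SameZeroComponent E α k u x ↔ SameZeroComponent E α k u y :=
      ⟨fun h => h.trans _ _ _ (.rel _ _ ⟨hxy, hk⟩),
        fun h => h.trans _ _ _ ((Relation.EqvGen.rel _ _ ⟨hxy, hk⟩).symm _ _)⟩
    simp only [Set.mem_ofPred_eq, hiff, sub_self, dvd_zero]
  · have hdvd := hc x y hxy hk
    split_ifs <;> simp [hdvd]

end Splines

theorem ZMod.intCast_dvd_intCast_of_gcd_dvd {n : ℕ} {a b : ℤ} (h : (Int.gcd a n : ℤ) ∣ b) :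
    (a : ZMod n) ∣ (b : ZMod n) := by
  obtain ⟨c, rfl⟩ := h
  refine ⟨Int.gcdA a n * c, ?_⟩
  rw [Int.gcd_eq_gcd_ab]
  push_cast
  simp only [ZMod.natCast_self]
  ring

theorem Int.gcd_prime_pow_dvd_pow_pred_of_not_dvd {p e : ℕ} (hp : p.Prime) {a : ℤ}
    (ha : ¬ (p : ℤ) ^ e ∣ a) : Int.gcd a (p ^ e : ℕ) ∣ p ^ (e - 1) := by
  have hdvd : Int.gcd a (p ^ e : ℕ) ∣ p ^ e :=
    Int.natCast_dvd_natCast.mp (Int.gcd_dvd_right _ _)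
  obtain ⟨k, hke, hk⟩ := (Nat.dvd_prime_pow hp).mp hdvd
  have hke' : k ≠ e := by
    rintro rfl
    exact ha (by exact_mod_cast hk ▸ Int.gcd_dvd_left a _)
  rw [hk]
  exact pow_dvd_pow p (by omega)

theorem exists_isSpline_ne_of_not_sameZeroComponent {V : Type*} {E : V → V → Prop}
    {α : V → V → ℤ} {p e : ℕ} (hp : p.Prime) (he : 1 ≤ e) {u v : V}
    (huv : ¬ SameZeroComponent E α ((p : ℤ) ^ e) u v) :
    ∃ g : V → ZMod (p ^ e), IsSpline E α g ∧ g u ≠ g v := by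
  refine ⟨_, isSpline_indicator_sameZeroComponent (k := (p : ℤ) ^ e)
    (c := ((p ^ (e - 1) : ℕ) : ZMod (p ^ e))) (fun x y _ hxy => ?_) u, ?_⟩
  · simpa using ZMod.intCast_dvd_intCast_of_gcd_dvd (b := ((p ^ (e - 1) : ℕ) : ℤ))
      (Int.natCast_dvd_natCast.mpr (Int.gcd_prime_pow_dvd_pow_pred_of_not_dvd hp hxy))
  · rw [Set.indicator_of_mem (show u ∈ {x | _} from .refl u),
      Set.indicator_of_notMem (s := {x | SameZeroComponent E α ((p : ℤ) ^ e) u x}) huv,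
      Ne, ZMod.natCast_eq_zero_iff, Nat.pow_dvd_pow_iff_le_right hp.one_lt]
    omega

theorem spline_values_agree_iff_same_components_general
    {V : Type*} (E : V → V → Prop)
    (α : V → V → ℤ)
    {ι : Type*} [Fintype ι] (p : ι → ℕ) (e : ι → ℕ)
    (hp : ∀ i, (p i).Prime) (hinj : Function.Injective p) (he : ∀ i, 1 ≤ e i)
    (m : ℕ) (hm : m = ∏ i, p i ^ e i)
    (u v : V) :
    (∀ f : V → ZMod m,
        (∀ x y : V, E x y → f x - f y ∈ Ideal.span {((α x y : ℤ) : ZMod m)}) →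
        f u = f v)
      ↔ ∀ i : ι,
          Relation.EqvGen (fun a b => E a b ∧ ((p i : ℤ)) ^ (e i) ∣ α a b) u v := by
  classical
  subst hm
  have hcop : Pairwise fun i j => (p i ^ e i).Coprime (p j ^ e j) := fun i j hij =>
    Nat.coprime_pow_primes _ _ (hp i) (hp j) (hinj.ne hij)
  let crt := ZMod.prodEquivPi _ hcop
  constructor
  · intro hall i
    by_contra huv
    obtain ⟨g, hg, hguv⟩ := exists_isSpline_ne_of_not_sameZeroComponent (hp i) (he i) huv
    have hlift := (hg.piSingle (A := fun j => ZMod (p j ^ e j))).map crt.symm.toRingHom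
    exact hguv (Pi.single_injective (M := fun j => ZMod (p j ^ e j)) i
      (crt.symm.injective (hall _ hlift)))
  · intro hcomp f hf
    refine crt.injective (funext fun i => ?_)
    have hreduce := (show IsSpline E α f from hf).map
      (ZMod.castHom (Finset.dvd_prod_of_mem _ (Finset.mem_univ i)) (ZMod (p i ^ e i)))
    simpa [crt] using hreduce.eq_of_sameZeroComponent (by exact_mod_cast hcomp i)

/-- For `m = ∏ pᵢ^{eᵢ}` with distinct primes, all splines over `ZMod m`
agree on two vertices `u, v` if and only if for every `i` the vertices `u` and `v` lie
in the same zero-connected component of `G` mod `pᵢ^{eᵢ}`. -/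
theorem spline_values_agree_iff_same_components
    {V : Type*} [Fintype V] (E : V → V → Prop) (hsymm : Symmetric E)
    (hirrefl : Irreflexive E) (α : V → V → ℤ) (hαsymm : ∀ u v, α u v = α v u)
    {ι : Type*} [Fintype ι] (p : ι → ℕ) (e : ι → ℕ)
    (hp : ∀ i, (p i).Prime) (hinj : Function.Injective p) (he : ∀ i, 1 ≤ e i)
    (m : ℕ) (hm : m = ∏ i, p i ^ e i)
    (u v : V) :
    (∀ f : V → ZMod m,
        (∀ x y : V, E x y → f x - f y ∈ Ideal.span {((α x y : ℤ) : ZMod m)}) →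
        f u = f v)
      ↔ ∀ i : ι,
          Relation.EqvGen (fun a b => E a b ∧ ((p i : ℤ)) ^ (e i) ∣ α a b) u v :=
  spline_values_agree_iff_same_components_general E α p e hp hinj he m hm u v
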